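/- For any graphs G and H with no isolated vertices, γ_gr^t(G ∘ H) ≥ α(G) · γ_gr^t(H), where α(G) is the independence number of G and ∘ is the lexicographic product. -/

import Mathlib

open SimpleGraph

/-- A legal open neighborhood sequence in `G`. -/
def IsOpenLegal {α : Type*} (G : SimpleGraph α) (L : List α) : Prop :=
  L.Nodup ∧ ∀ i : Fin L.length, ∃ w, G.Adj (L.get i) w ∧
    ∀ j : Fin L.length, j < i → ¬ G.Adj (L.get j) w

/-- The Grundy total domination number of `G`. -/
noncomputable def grundyT {α : Type*} (G : SimpleGraph α) : ℕ :=
  sSup {n | ∃ L : List α, IsOpenLegal G L ∧ L.length = n}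

/-- A legal closed neighborhood (dominating) sequence in `G`. -/
def IsClosedLegal {α : Type*} (G : SimpleGraph α) (L : List α) : Prop :=
  L.Nodup ∧ ∀ i : Fin L.length, ∃ w, (G.Adj (L.get i) w ∨ L.get i = w) ∧
    ∀ j : Fin L.length, j < i → ¬ (G.Adj (L.get j) w ∨ L.get j = w)

/-- The Grundy domination number of `G`. -/
noncomputable def grundyDom {α : Type*} (G : SimpleGraph α) : ℕ :=
  sSup {n | ∃ L : List α, IsClosedLegal G L ∧ L.length = n}

/-- The direct (tensor) product of simple graphs. -/
def directProd {α β : Type*} (G : SimpleGraph α) (H : SimpleGraph β) : SimpleGraph (α × β) where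
  Adj x y := G.Adj x.1 y.1 ∧ H.Adj x.2 y.2
  symm := ⟨fun _ _ h => ⟨h.1.symm, h.2.symm⟩⟩
  loopless := ⟨fun x h => G.irrefl h.1⟩

/-- The lexicographic product of simple graphs. -/
def lexProd {α β : Type*} (G : SimpleGraph α) (H : SimpleGraph β) : SimpleGraph (α × β) where
  Adj x y := G.Adj x.1 y.1 ∨ (x.1 = y.1 ∧ H.Adj x.2 y.2)
  symm := by
    constructor
    rintro x y (h | ⟨h1, h2⟩)
    · exact Or.inl h.symm
    · exact Or.inr ⟨h1.symm, h2.symm⟩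
  loopless := by
    constructor
    rintro x (h | ⟨_, h⟩)
    · exact G.irrefl h
    · exact H.irrefl h

/-- The strong product of simple graphs. -/
def strongProd {α β : Type*} (G : SimpleGraph α) (H : SimpleGraph β) : SimpleGraph (α × β) where
  Adj x y := (G.Adj x.1 y.1 ∧ x.2 = y.2) ∨ (x.1 = y.1 ∧ H.Adj x.2 y.2) ∨
    (G.Adj x.1 y.1 ∧ H.Adj x.2 y.2)
  symm := by
    constructor
    rintro x y (⟨h, e⟩ | ⟨e, h⟩ | ⟨h1, h2⟩)
    · exact Or.inl ⟨h.symm, e.symm⟩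
    · exact Or.inr (Or.inl ⟨e.symm, h.symm⟩)
    · exact Or.inr (Or.inr ⟨h1.symm, h2.symm⟩)
  loopless := by
    constructor
    rintro x (⟨h, _⟩ | ⟨_, h⟩ | ⟨h, _⟩)
    · exact G.irrefl h
    · exact H.irrefl h
    · exact G.irrefl h

/-- The minimum number of complete bipartite subgraphs of `G` covering all edges of `G`. -/
noncomputable def bc {α : Type*} (G : SimpleGraph α) : ℕ :=
  sInf {k | ∃ A B : Fin k → Set α,
    (∀ i a b, a ∈ A i → b ∈ B i → G.Adj a b) ∧
    (∀ u v, G.Adj u v → ∃ i, (u ∈ A i ∧ v ∈ B i) ∨ (v ∈ A i ∧ u ∈ B i))}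

/-- `aD G L` is the number of entries of `L` not adjacent to any earlier entry. -/
noncomputable def aD {α : Type*} (G : SimpleGraph α) (L : List α) : ℕ :=
  {i : Fin L.length | ∀ j : Fin L.length, j < i → ¬ G.Adj (L.get j) (L.get i)}.ncard

/-- The vertex cover number of `G`. -/
noncomputable def vertexCoverNum {α : Type*} (G : SimpleGraph α) : ℕ :=
  sInf {n | ∃ S : Finset α, S.card = n ∧ ∀ u v, G.Adj u v → u ∈ S ∨ v ∈ S}

/-- The independence number of `G`. -/
noncomputable def indepNum {α : Type*} (G : SimpleGraph α) : ℕ :=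
  sSup {n | ∃ S : Finset α, S.card = n ∧ ∀ u ∈ S, ∀ v ∈ S, ¬ G.Adj u v}

/-!
Let `s₁, …, sₘ` be a maximum independent set of `G` and `ℓ₁, …, ℓₙ` a longest legal open
neighbourhood sequence of `H`. Listing the vertices `(sₐ, ℓᵢ)` of `G ∘ H` fibre after fibre gives a
legal sequence of length `m n`: if `w` is a footprint of `ℓᵢ` in `H`, then `(sₐ, w)` is one of
`(sₐ, ℓᵢ)`, no earlier vertex of the same fibre dominates it, and no vertex of another fibre
reaches it through `G`, because the `sₐ` are pairwise non-adjacent.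
-/

theorem Fin.modNat_lt_modNat_of_lt_of_divNat_eq {m n : ℕ} {i j : Fin (m * n)} (hji : j < i)
    (hdiv : j.divNat = i.divNat) : j.modNat < i.modNat := by
  rw [Fin.ext_iff] at hdiv
  rw [Fin.lt_def] at hji ⊢
  simp only [Fin.coe_divNat, Fin.coe_modNat] at hdiv ⊢
  have hj := Nat.div_add_mod (j : ℕ) n
  have hi := Nat.div_add_mod (i : ℕ) n
  rw [hdiv] at hj
  omega

section

variable {α β : Type*} {G : SimpleGraph α} {H : SimpleGraph β}

theorem isOpenLegal_ofFn {n : ℕ} {f : Fin n → α} (hf : Function.Injective f)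
    (hlegal : ∀ i, ∃ w, G.Adj (f i) w ∧ ∀ j < i, ¬ G.Adj (f j) w) :
    IsOpenLegal G (List.ofFn f) := by
  refine ⟨List.nodup_ofFn.mpr hf, fun i => ?_⟩
  obtain ⟨w, hw, hfresh⟩ := hlegal (i.cast List.length_ofFn)
  simp only [List.get_ofFn]
  exact ⟨w, hw, fun j hj => hfresh (j.cast List.length_ofFn) hj⟩

theorem isOpenLegal_lexProd_ofFn {m n : ℕ} {s : Fin m → α} (hs : Function.Injective s)
    (hind : ∀ a b, ¬ G.Adj (s a) (s b)) {ℓ : Fin n → β} (hℓ : Function.Injective ℓ)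
    (hlegal : ∀ i, ∃ w, H.Adj (ℓ i) w ∧ ∀ j < i, ¬ H.Adj (ℓ j) w) :
    IsOpenLegal (lexProd G H) (List.ofFn fun k : Fin (m * n) => (s k.divNat, ℓ k.modNat)) := by
  refine isOpenLegal_ofFn (fun k k' hkk' => ?_) fun k => ?_
  · simp only [Prod.ext_iff] at hkk'
    apply finProdFinEquiv.symm.injective
    simp only [finProdFinEquiv_symm_apply, hs hkk'.1, hℓ hkk'.2]
  · obtain ⟨w, hw, hfresh⟩ := hlegal k.modNat
    refine ⟨(s k.divNat, w), Or.inr ⟨rfl, hw⟩, ?_⟩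
    rintro j hjk (hG | ⟨hdiv, hH⟩)
    · exact hind _ _ hG
    · exact hfresh _ (Fin.modNat_lt_modNat_of_lt_of_divNat_eq hjk (hs hdiv)) hH

variable [Fintype α]

theorem bddAbove_isOpenLegal_length (G : SimpleGraph α) :
    BddAbove {n | ∃ L : List α, IsOpenLegal G L ∧ L.length = n} := by
  refine ⟨Fintype.card α, ?_⟩
  rintro n ⟨L, hL, rfl⟩
  exact hL.1.length_le_card

theorem IsOpenLegal.length_le_grundyT {L : List α} (hL : IsOpenLegal G L) :
    L.length ≤ grundyT G :=
  le_csSup (bddAbove_isOpenLegal_length G) (Set.mem_ofPred.mpr ⟨L, hL, rfl⟩)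

theorem exists_isOpenLegal_length_eq_grundyT (G : SimpleGraph α) :
    ∃ L : List α, IsOpenLegal G L ∧ L.length = grundyT G := by
  refine Nat.sSup_mem ?_ (bddAbove_isOpenLegal_length G)
  exact ⟨0, Set.mem_ofPred.mpr ⟨[], ⟨List.nodup_nil, fun i => i.elim0⟩, rfl⟩⟩

theorem bddAbove_independent_card (G : SimpleGraph α) :
    BddAbove {n | ∃ S : Finset α, S.card = n ∧ ∀ u ∈ S, ∀ v ∈ S, ¬ G.Adj u v} := by
  refine ⟨Fintype.card α, ?_⟩
  rintro n ⟨S, rfl, -⟩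
  exact S.card_le_univ

theorem exists_finset_card_eq_indepNum (G : SimpleGraph α) :
    ∃ S : Finset α, S.card = _root_.indepNum G ∧ ∀ u ∈ S, ∀ v ∈ S, ¬ G.Adj u v := by
  refine Nat.sSup_mem ?_ (bddAbove_independent_card G)
  exact ⟨0, Set.mem_ofPred.mpr ⟨∅, rfl, by simp⟩⟩

end

theorem grundyT_lexProd_ge_indep_general {α β : Type*} [Fintype α] [Fintype β]
    (G : SimpleGraph α) (H : SimpleGraph β) :
    _root_.indepNum G * grundyT H ≤ grundyT (lexProd G H) := by
  obtain ⟨S, hcard, hind⟩ := exists_finset_card_eq_indepNum G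
  obtain ⟨L, hL, hlen⟩ := exists_isOpenLegal_length_eq_grundyT H
  have hprod := isOpenLegal_lexProd_ofFn (List.nodup_iff_injective_get.mp S.nodup_toList)
    (fun a b => hind _ (Finset.mem_toList.mp (List.getElem_mem _)) _
      (Finset.mem_toList.mp (List.getElem_mem _))) (List.nodup_iff_injective_get.mp hL.1) hL.2
  calc _root_.indepNum G * grundyT H = S.toList.length * L.length := by
        rw [Finset.length_toList, hcard, hlen]
    _ ≤ grundyT (lexProd G H) := by simpa using hprod.length_le_grundyT

theorem grundyT_lexProd_ge_indep {α β : Type*} [Fintype α] [Fintype β]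
    (G : SimpleGraph α) (H : SimpleGraph β)
    (hG : ∀ v, ∃ w, G.Adj v w) (hH : ∀ v, ∃ w, H.Adj v w) :
    _root_.indepNum G * grundyT H ≤ grundyT (lexProd G H) :=
  grundyT_lexProd_ge_indep_general G H
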